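/- arXiv:math/0309008 — 2 statements merged into one kernel-verified Lean document; each statement's English description precedes it below -/
import Mathlib

section
/- The eigenvalues of the symbol σ above are nonnegative when P is positive definite: in particular, taking P = Id and ζ = e₁, the operator g̃ ↦ σ(g̃) acting on symmetric 3×3 matrices has all eigenvalues ≥ 0. -/
open Matrix

/-!
For `P = 1` the symbol is `σ(g) = |ζ|² g + (tr g) ζζᵀ - ζ (ζᵀ g) - (g ζ) ζᵀ`. For `ζ = e₀` it fixes the
entries of `g` off row and column `0`, kills the off-diagonal entries of that row and column, and sends
`g₀₀` to `tr g - g₀₀`. So an eigenvector for an eigenvalue `μ ∉ {0, 1}` vanishes first off row and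
column `0`, then on them off the diagonal, and finally at `(0, 0)`.
-/

variable {n R : Type*} [Fintype n] [DecidableEq n]

def symbol [CommRing R] (P : Matrix n n R) (ζ : n → R) (g : Matrix n n R) : Matrix n n R :=
  of fun i j => -(∑ m, ∑ l, P m l *
    (ζ i * ζ m * g l j + ζ l * ζ j * g i m - ζ i * ζ j * g l m - ζ l * ζ m * g i j))

theorem symbol_one_apply [CommRing R] (ζ : n → R) (g : Matrix n n R) (i j : n) :
    symbol 1 ζ g i j =
      (ζ ⬝ᵥ ζ) * g i j + ζ i * ζ j * g.trace - ζ i * (ζ ᵥ* g) j - ζ j * (g *ᵥ ζ) i := by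
  simp only [symbol, of_apply, one_apply, ite_mul, one_mul, zero_mul, Finset.sum_ite_eq,
    Finset.mem_univ, if_true, dotProduct, vecMul, mulVec, trace, diag, Finset.mul_sum,
    Finset.sum_mul, ← Finset.sum_add_distrib, ← Finset.sum_sub_distrib, ← Finset.sum_neg_distrib]
  exact Finset.sum_congr rfl fun _ _ => by ring

section single
variable [CommRing R] (i₀ : n) (g : Matrix n n R)

theorem symbol_one_single_apply_of_ne {i j : n} (hi : i ≠ i₀) (hj : j ≠ i₀) :
    symbol 1 (Pi.single i₀ 1) g i j = g i j := by
  simp [symbol_one_apply, hi, hj]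

theorem symbol_one_single_apply_self_left {j : n} (hj : j ≠ i₀) :
    symbol 1 (Pi.single i₀ 1) g i₀ j = 0 := by
  simp [symbol_one_apply, hj]

theorem symbol_one_single_apply_self_right {i : n} (hi : i ≠ i₀) :
    symbol 1 (Pi.single i₀ 1) g i i₀ = 0 := by
  simp [symbol_one_apply, hi]

theorem symbol_one_single_apply_self :
    symbol 1 (Pi.single i₀ 1) g i₀ i₀ = ∑ k ∈ Finset.univ.erase i₀, g k k := by
  rw [symbol_one_apply, trace, ← Finset.add_sum_erase _ _ (Finset.mem_univ i₀)]
  simp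

end single

theorem eq_zero_or_eq_one_of_symbol_one_single_eq_smul [Field R] {i₀ : n} {g : Matrix n n R}
    (hg : g ≠ 0) {μ : R} (h : symbol 1 (Pi.single i₀ 1) g = μ • g) : μ = 0 ∨ μ = 1 := by
  by_contra! hμ
  obtain ⟨hμ0, hμ1⟩ := hμ
  have entry (i j : n) : symbol 1 (Pi.single i₀ 1) g i j = μ * g i j := by
    simpa using congrFun₂ h i j
  have block {i j : n} (hi : i ≠ i₀) (hj : j ≠ i₀) : g i j = 0 := by
    have fixed := entry i j
    rw [symbol_one_single_apply_of_ne i₀ g hi hj] at fixed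
    exact (mul_eq_zero.mp (by linear_combination fixed : (1 - μ) * g i j = 0)).resolve_left
      (sub_ne_zero.mpr hμ1.symm)
  have row {j : n} (hj : j ≠ i₀) : g i₀ j = 0 := by
    have killed := entry i₀ j
    rw [symbol_one_single_apply_self_left i₀ g hj] at killed
    exact (mul_eq_zero.mp killed.symm).resolve_left hμ0
  have col {i : n} (hi : i ≠ i₀) : g i i₀ = 0 := by
    have killed := entry i i₀
    rw [symbol_one_single_apply_self_right i₀ g hi] at killed
    exact (mul_eq_zero.mp killed.symm).resolve_left hμ0
  have corner : g i₀ i₀ = 0 := by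
    have traced := entry i₀ i₀
    rw [symbol_one_single_apply_self,
      Finset.sum_eq_zero fun k hk => block (Finset.ne_of_mem_erase hk) (Finset.ne_of_mem_erase hk)]
      at traced
    exact (mul_eq_zero.mp traced.symm).resolve_left hμ0
  refine hg (Matrix.ext fun i j => ?_)
  rcases eq_or_ne i i₀ with rfl | hi
  · rcases eq_or_ne j i with rfl | hj
    · exact corner
    · exact row hj
  · rcases eq_or_ne j i₀ with rfl | hj
    · exact col hi
    · exact block hi hj

theorem symbol_eigenvalues_nonneg_general
    (P : Matrix (Fin 3) (Fin 3) ℝ) (hP : P = 1)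
    (ζ : Fin 3 → ℝ) (hζ : ζ = fun i => if i = 0 then 1 else 0)
    (gt : Matrix (Fin 3) (Fin 3) ℝ) (hne : gt ≠ 0)
    (μ : ℝ)
    (heig : ∀ i j, (-(∑ m, ∑ l, P m l *
        (ζ i * ζ m * gt l j + ζ l * ζ j * gt i m
          - ζ i * ζ j * gt l m - ζ l * ζ m * gt i j))) = μ * gt i j) :
    0 ≤ μ := by
  have hζ_single : ζ = Pi.single 0 1 := by
    subst hζ
    funext i
    simp [Pi.single_apply]
  subst hP hζ_single
  have h : symbol 1 (Pi.single 0 1) gt = μ • gt := Matrix.ext heig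
  rcases eq_zero_or_eq_one_of_symbol_one_single_eq_smul hne h with rfl | rfl <;> norm_num

/-- With `P = Id` and `ζ = e₁`, every eigenvalue of the symbol
`σ(g̃)_{ij} = -Σ_{m,ℓ} P^{mℓ}(ζ_i ζ_m g̃_{ℓj} + ζ_ℓ ζ_j g̃_{im} - ζ_i ζ_j g̃_{ℓm} - ζ_ℓ ζ_m g̃_{ij})`
acting on symmetric 3×3 matrices is nonnegative. -/
theorem symbol_eigenvalues_nonneg
    (P : Matrix (Fin 3) (Fin 3) ℝ) (hP : P = 1)
    (ζ : Fin 3 → ℝ) (hζ : ζ = fun i => if i = 0 then 1 else 0)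
    (gt : Matrix (Fin 3) (Fin 3) ℝ) (hgt : gt.IsSymm) (hne : gt ≠ 0)
    (μ : ℝ)
    (heig : ∀ i j, (-(∑ m, ∑ l, P m l *
        (ζ i * ζ m * gt l j + ζ l * ζ j * gt i m
          - ζ i * ζ j * gt l m - ζ l * ζ m * gt i j))) = μ * gt i j) :
    0 ≤ μ :=
  symbol_eigenvalues_nonneg_general P hP ζ hζ gt hne μ heig
end

section
/- Orthogonal decomposition of the antisymmetrized tensor T: if T^{ijk} = E^{ijk} - (1/10)(P^{ij}T^k + P^{ik}T^j) + (2/5)P^{jk}T^i with E traceless in the sense V_{ij}E^{ijk} = V_{ik}E^{ijk} = V_{jk}E^{ijk} = 0 (taking the fully traceless normalization), then |T^{ijk} - T^{jik}|² = |E^{ijk} - E^{jik}|² + |T^i|², where norms and traces use the metric V = P⁻¹. -/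
open Matrix

set_option maxHeartbeats 2000000

/-- Orthogonal decomposition of the antisymmetrized tensor `T`:
with `V = P⁻¹`, `T` symmetric in its last two indices, `Tᵢ = V_{jk}T^{ijk}`,
`E^{ijk} = T^{ijk} + (1/10)(P^{ij}T^k + P^{ik}T^j) - (2/5)P^{jk}T^i` traceless,
one has `|T^{ijk} - T^{jik}|² = |E^{ijk} - E^{jik}|² + |T^i|²`
(norms taken with respect to `V`). -/
theorem antisym_norm_decomposition
    (P : Matrix (Fin 3) (Fin 3) ℝ) (hP : P.PosDef)
    (T : Fin 3 → Fin 3 → Fin 3 → ℝ)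
    (hTsym : ∀ i j k, T i j k = T i k j)
    (V : Matrix (Fin 3) (Fin 3) ℝ) (hV : V = P⁻¹)
    (Tv : Fin 3 → ℝ) (hTv : ∀ i, Tv i = ∑ j, ∑ k, V j k * T i j k)
    (E : Fin 3 → Fin 3 → Fin 3 → ℝ)
    (hE : ∀ i j k, E i j k =
      T i j k + (1 / 10) * (P i j * Tv k + P i k * Tv j) - (2 / 5) * (P j k * Tv i))
    (hE1 : ∀ k, ∑ i, ∑ j, V i j * E i j k = 0)
    (hE2 : ∀ i, ∑ j, ∑ k, V j k * E i j k = 0) :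
    (∑ i, ∑ j, ∑ k, ∑ a, ∑ b, ∑ c, V i a * V j b * V k c *
        (T i j k - T j i k) * (T a b c - T b a c)) =
    (∑ i, ∑ j, ∑ k, ∑ a, ∑ b, ∑ c, V i a * V j b * V k c *
        (E i j k - E j i k) * (E a b c - E b a c)) +
    (∑ i, ∑ j, V i j * Tv i * Tv j) := by
  -- basic symmetry and inverse facts
  have hPsym : ∀ i j, P i j = P j i := by
    intro i j
    have h := congrFun (congrFun hP.isHermitian i) j
    simpa [Matrix.conjTranspose_apply] using h.symm
  have hPVmat : P * V = 1 := by
    rw [hV]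
    exact Matrix.mul_nonsing_inv P (isUnit_iff_ne_zero.mpr hP.det_pos.ne')
  have hVsym : ∀ i j, V i j = V j i := by
    intro i j
    have hPT : Pᵀ = P := by ext a b; exact hPsym b a
    have hVT : Vᵀ = V := by rw [hV, Matrix.transpose_nonsing_inv, hPT]
    have := congrFun (congrFun hVT j) i
    simpa [Matrix.transpose_apply] using this
  have hPV1 : ∀ b k, (∑ c, P b c * V c k) = if b = k then 1 else 0 := by
    intro b k
    have h := congrFun (congrFun hPVmat b) k
    rw [Matrix.mul_apply] at h
    rw [h, Matrix.one_apply]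
  have hPV2 : ∀ b k, (∑ c, P b c * V k c) = if b = k then 1 else 0 := by
    intro b k
    rw [← hPV1 b k]
    exact Finset.sum_congr rfl fun c _ => by rw [hVsym k c]
  -- the contracted vector u i = ∑ a, V i a * Tv a
  obtain ⟨u, hu⟩ : ∃ u : Fin 3 → ℝ, ∀ i, u i = ∑ a, V i a * Tv a :=
    ⟨_, fun _ => rfl⟩
  -- symmetry of E in its last two indices
  have hEsym : ∀ i j k, E i j k = E i k j := by
    intro i j k
    rw [hE i j k, hE i k j, hTsym i j k, hPsym k j]
    ring
  -- trace identities
  have L3 : ∀ j, (∑ i, ∑ k, V i k * E i j k) = 0 := by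
    intro j
    calc (∑ i, ∑ k, V i k * E i j k)
        = ∑ i, ∑ k, V i k * E i k j := by
          exact Finset.sum_congr rfl fun i _ => Finset.sum_congr rfl fun k _ => by
            rw [hEsym i j k]
      _ = 0 := hE1 j
  have tA1 : ∀ i, (∑ j, ∑ k, V j k * (E i j k - E j i k)) = 0 := by
    intro i
    have hsplit : (∑ j, ∑ k, V j k * (E i j k - E j i k))
        = (∑ j, ∑ k, V j k * E i j k) - (∑ j, ∑ k, V j k * E j i k) := by
      simp only [mul_sub, Finset.sum_sub_distrib]
    rw [hsplit, hE2 i, L3 i, sub_zero]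
  have tA2 : ∀ j, (∑ i, ∑ k, V i k * (E i j k - E j i k)) = 0 := by
    intro j
    have hsplit : (∑ i, ∑ k, V i k * (E i j k - E j i k))
        = (∑ i, ∑ k, V i k * E i j k) - (∑ i, ∑ k, V i k * E j i k) := by
      simp only [mul_sub, Finset.sum_sub_distrib]
    rw [hsplit, L3 j, hE2 j, sub_zero]
  -- contraction of two V's against P
  have K : ∀ x y, (∑ b, ∑ c, V x b * V y c * P b c) = V x y := by
    intro x y
    have h1 : ∀ b, (∑ c, V x b * V y c * P b c) = V x b * (if b = y then 1 else 0) := by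
      intro b
      rw [← hPV2 b y, Finset.mul_sum]
      exact Finset.sum_congr rfl fun c _ => by ring
    simp only [h1, mul_ite, mul_one, mul_zero]
    simp
  -- the pointwise decomposition of the antisymmetrized T
  have hD : ∀ i j k, T i j k - T j i k =
      (E i j k - E j i k) + (1/2) * (P j k * Tv i - P i k * Tv j) := by
    intro i j k
    rw [hE i j k, hE j i k, hPsym j i]
    ring
  -- contraction of the inner three sums against the P-Tv part
  have Cin : ∀ i j k, (∑ a, ∑ b, ∑ c, V i a * V j b * V k c *
      (P b c * Tv a - P a c * Tv b)) = u i * V j k - u j * V i k := by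
    intro i j k
    have h1 : ∀ a, (∑ b, ∑ c, V i a * V j b * V k c * (P b c * Tv a))
        = V i a * Tv a * V j k := by
      intro a
      rw [← K j k]
      simp only [Finset.mul_sum]
      exact Finset.sum_congr rfl fun b _ => Finset.sum_congr rfl fun c _ => by ring
    have h2 : ∀ a, (∑ b, ∑ c, V i a * V j b * V k c * (P a c * Tv b))
        = (if a = k then V i a * u j else 0) := by
      intro a
      have hb : (∑ b, V i a * (V j b * Tv b)) = V i a * u j := by
        rw [hu j, Finset.mul_sum]
      calc (∑ b, ∑ c, V i a * V j b * V k c * (P a c * Tv b))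
          = ∑ b, ∑ c, (V i a * (V j b * Tv b)) * (P a c * V k c) := by
            exact Finset.sum_congr rfl fun b _ => Finset.sum_congr rfl fun c _ => by ring
        _ = (∑ b, V i a * (V j b * Tv b)) * (∑ c, P a c * V k c) :=
            (Finset.sum_mul_sum _ _ _ _).symm
        _ = (V i a * u j) * (if a = k then 1 else 0) := by rw [hb, hPV2 a k]
        _ = (if a = k then V i a * u j else 0) := by
            by_cases h : a = k <;> simp [h]
    have hsplit : (∑ a, ∑ b, ∑ c, V i a * V j b * V k c * (P b c * Tv a - P a c * Tv b))
        = (∑ a, ∑ b, ∑ c, V i a * V j b * V k c * (P b c * Tv a))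
          - (∑ a, ∑ b, ∑ c, V i a * V j b * V k c * (P a c * Tv b)) := by
      simp only [mul_sub, Finset.sum_sub_distrib]
    rw [hsplit]
    have hA : (∑ a, ∑ b, ∑ c, V i a * V j b * V k c * (P b c * Tv a)) = u i * V j k := by
      simp only [h1]
      rw [hu i, Finset.sum_mul]
    have hB : (∑ a, ∑ b, ∑ c, V i a * V j b * V k c * (P a c * Tv b)) = u j * V i k := by
      simp only [h2]
      simp [Finset.sum_ite_eq]
      ring
    rw [hA, hB]
  -- splitting a six-fold sum
  have hsplit6 : ∀ X Y : Fin 3 → Fin 3 → Fin 3 → ℝ,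
      (∑ i, ∑ j, ∑ k, ∑ a, ∑ b, ∑ c, V i a * V j b * V k c * X i j k * Y a b c)
      = ∑ i, ∑ j, ∑ k, X i j k *
          ∑ a, ∑ b, ∑ c, V i a * V j b * V k c * Y a b c := by
    intro X Y
    refine Finset.sum_congr rfl fun i _ => Finset.sum_congr rfl fun j _ =>
      Finset.sum_congr rfl fun k _ => ?_
    rw [Finset.mul_sum]
    refine Finset.sum_congr rfl fun a _ => ?_
    rw [Finset.mul_sum]
    refine Finset.sum_congr rfl fun b _ => ?_
    rw [Finset.mul_sum]
    exact Finset.sum_congr rfl fun c _ => by ring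
  -- full commutation of the six sums
  have comm6 : ∀ f : Fin 3 → Fin 3 → Fin 3 → Fin 3 → Fin 3 → Fin 3 → ℝ,
      (∑ i, ∑ j, ∑ k, ∑ a, ∑ b, ∑ c, f i j k a b c)
      = ∑ a, ∑ b, ∑ c, ∑ i, ∑ j, ∑ k, f i j k a b c := by
    intro f
    simp only [Fin.sum_univ_three]
    abel
  -- Cross term 1 vanishes
  have X1 : (∑ i, ∑ j, ∑ k, ∑ a, ∑ b, ∑ c, V i a * V j b * V k c *
      (E i j k - E j i k) * (P b c * Tv a - P a c * Tv b)) = 0 := by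
    rw [hsplit6]
    simp only [Cin]
    have step : ∀ i j k : Fin 3, (E i j k - E j i k) * (u i * V j k - u j * V i k)
        = (E i j k - E j i k) * (u i * V j k) - (E i j k - E j i k) * (u j * V i k) :=
      fun i j k => by ring
    simp only [step]
    simp only [Finset.sum_sub_distrib]
    have Z1 : (∑ i, ∑ j, ∑ k, (E i j k - E j i k) * (u i * V j k)) = 0 := by
      refine Finset.sum_eq_zero fun i _ => ?_
      calc (∑ j, ∑ k, (E i j k - E j i k) * (u i * V j k))
          = u i * ∑ j, ∑ k, V j k * (E i j k - E j i k) := by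
            simp only [Finset.mul_sum]
            exact Finset.sum_congr rfl fun j _ => Finset.sum_congr rfl fun k _ => by ring
        _ = 0 := by rw [tA1 i, mul_zero]
    have Z2 : (∑ i, ∑ j, ∑ k, (E i j k - E j i k) * (u j * V i k)) = 0 := by
      rw [Finset.sum_comm]
      refine Finset.sum_eq_zero fun j _ => ?_
      calc (∑ i, ∑ k, (E i j k - E j i k) * (u j * V i k))
          = u j * ∑ i, ∑ k, V i k * (E i j k - E j i k) := by
            simp only [Finset.mul_sum]
            exact Finset.sum_congr rfl fun i _ => Finset.sum_congr rfl fun k _ => by ring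
        _ = 0 := by rw [tA2 j, mul_zero]
    rw [Z1, Z2, sub_zero]
  -- Cross term 2 vanishes (by symmetry from X1)
  have X2 : (∑ i, ∑ j, ∑ k, ∑ a, ∑ b, ∑ c, V i a * V j b * V k c *
      (P j k * Tv i - P i k * Tv j) * (E a b c - E b a c)) = 0 := by
    rw [comm6]
    calc (∑ a, ∑ b, ∑ c, ∑ i, ∑ j, ∑ k, V i a * V j b * V k c *
          (P j k * Tv i - P i k * Tv j) * (E a b c - E b a c))
        = ∑ a, ∑ b, ∑ c, ∑ i, ∑ j, ∑ k, V a i * V b j * V c k *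
          (E a b c - E b a c) * (P j k * Tv i - P i k * Tv j) := by
          refine Finset.sum_congr rfl fun a _ => Finset.sum_congr rfl fun b _ =>
            Finset.sum_congr rfl fun c _ => Finset.sum_congr rfl fun i _ =>
            Finset.sum_congr rfl fun j _ => Finset.sum_congr rfl fun k _ => ?_
          rw [hVsym i a, hVsym j b, hVsym k c]
          ring
      _ = 0 := X1
  -- The pure P-Tv term
  have trPV : (∑ j, ∑ k, P j k * V j k) = 3 := by
    have h : ∀ j : Fin 3, (∑ k, P j k * V j k) = 1 := fun j => by
      have := hPV2 j j; simpa using this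
    simp only [h]
    simp
  have X3 : (∑ i, ∑ j, ∑ k, ∑ a, ∑ b, ∑ c, V i a * V j b * V k c *
      (P j k * Tv i - P i k * Tv j) * (P b c * Tv a - P a c * Tv b))
      = 4 * ∑ i, ∑ j, V i j * Tv i * Tv j := by
    rw [hsplit6]
    simp only [Cin]
    have step : ∀ i j k : Fin 3, (P j k * Tv i - P i k * Tv j) * (u i * V j k - u j * V i k)
        = (P j k * Tv i) * (u i * V j k) - (P j k * Tv i) * (u j * V i k)
          - (P i k * Tv j) * (u i * V j k) + (P i k * Tv j) * (u j * V i k) :=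
      fun i j k => by ring
    simp only [step]
    simp only [Finset.sum_add_distrib, Finset.sum_sub_distrib]
    have M1 : (∑ i, ∑ j, ∑ k, (P j k * Tv i) * (u i * V j k))
        = 3 * ∑ i, Tv i * u i := by
      have h : ∀ i, (∑ j, ∑ k, (P j k * Tv i) * (u i * V j k)) = Tv i * u i * 3 := by
        intro i
        calc (∑ j, ∑ k, (P j k * Tv i) * (u i * V j k))
            = Tv i * u i * ∑ j, ∑ k, P j k * V j k := by
              simp only [Finset.mul_sum]
              exact Finset.sum_congr rfl fun j _ => Finset.sum_congr rfl fun k _ => by ring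
          _ = Tv i * u i * 3 := by rw [trPV]
      simp only [h]
      rw [Finset.mul_sum]
      exact Finset.sum_congr rfl fun i _ => by ring
    have M2 : (∑ i, ∑ j, ∑ k, (P j k * Tv i) * (u j * V i k)) = ∑ i, Tv i * u i := by
      refine Finset.sum_congr rfl fun i _ => ?_
      have h : ∀ j, (∑ k, (P j k * Tv i) * (u j * V i k))
          = Tv i * u j * (if j = i then 1 else 0) := by
        intro j
        calc (∑ k, (P j k * Tv i) * (u j * V i k))
            = Tv i * u j * ∑ k, P j k * V i k := by
              rw [Finset.mul_sum]
              exact Finset.sum_congr rfl fun k _ => by ring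
          _ = _ := by rw [hPV2 j i]
      simp only [h, mul_ite, mul_one, mul_zero]
      simp
    have M3 : (∑ i, ∑ j, ∑ k, (P i k * Tv j) * (u i * V j k)) = ∑ i, Tv i * u i := by
      refine Finset.sum_congr rfl fun i _ => ?_
      have h : ∀ j, (∑ k, (P i k * Tv j) * (u i * V j k))
          = Tv j * u i * (if i = j then 1 else 0) := by
        intro j
        calc (∑ k, (P i k * Tv j) * (u i * V j k))
            = Tv j * u i * ∑ k, P i k * V j k := by
              rw [Finset.mul_sum]
              exact Finset.sum_congr rfl fun k _ => by ring
          _ = _ := by rw [hPV2 i j]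
      simp only [h, mul_ite, mul_one, mul_zero]
      simp
    have M4 : (∑ i, ∑ j, ∑ k, (P i k * Tv j) * (u j * V i k))
        = 3 * ∑ j, Tv j * u j := by
      have h : ∀ i, (∑ j, ∑ k, (P i k * Tv j) * (u j * V i k)) = ∑ j, Tv j * u j := by
        intro i
        refine Finset.sum_congr rfl fun j _ => ?_
        have hk : (∑ k, P i k * V i k) = 1 := by
          have := hPV2 i i; simpa using this
        calc (∑ k, (P i k * Tv j) * (u j * V i k))
            = Tv j * u j * ∑ k, P i k * V i k := by
              rw [Finset.mul_sum]
              exact Finset.sum_congr rfl fun k _ => by ring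
          _ = Tv j * u j := by rw [hk, mul_one]
      simp only [h]
      simp [Finset.sum_const]
    have hS : (∑ i, ∑ j, V i j * Tv i * Tv j) = ∑ i, Tv i * u i := by
      refine Finset.sum_congr rfl fun i _ => ?_
      rw [hu i, Finset.mul_sum]
      exact Finset.sum_congr rfl fun j _ => by ring
    rw [M1, M2, M3, M4, hS]
    ring
  -- final assembly
  have expand : (∑ i, ∑ j, ∑ k, ∑ a, ∑ b, ∑ c, V i a * V j b * V k c *
        (T i j k - T j i k) * (T a b c - T b a c))
      = ∑ i, ∑ j, ∑ k, ∑ a, ∑ b, ∑ c,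
          (V i a * V j b * V k c * (E i j k - E j i k) * (E a b c - E b a c)
           + (1/2) * (V i a * V j b * V k c * (E i j k - E j i k) *
               (P b c * Tv a - P a c * Tv b))
           + (1/2) * (V i a * V j b * V k c * (P j k * Tv i - P i k * Tv j) *
               (E a b c - E b a c))
           + (1/4) * (V i a * V j b * V k c * (P j k * Tv i - P i k * Tv j) *
               (P b c * Tv a - P a c * Tv b))) := by
    refine Finset.sum_congr rfl fun i _ => Finset.sum_congr rfl fun j _ =>
      Finset.sum_congr rfl fun k _ => Finset.sum_congr rfl fun a _ =>
      Finset.sum_congr rfl fun b _ => Finset.sum_congr rfl fun c _ => ?_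
    rw [hD i j k, hD a b c]
    ring
  rw [expand]
  simp only [Finset.sum_add_distrib]
  simp only [← Finset.mul_sum]
  rw [X1, X2, X3]
  ring
end
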